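/- arXiv:2605.21718 — 5 statements merged into one kernel-verified Lean document; each statement's English description precedes it below -/
import Mathlib

section
/- Let d ≥ 1 and 0 ≤ r < d be integers and let ζ_{2d} := e^{πi/d}. Then num(r, ζ_{2d}) ≠ 0. -/
open Polynomial Finset

/-- `h_λ(x) = ∏_{i=1}^{n} (1+x^i)^(⌊n/i⌋ - m_λ(i))` in `ℤ[x]`, where `m_λ(i)` is the
multiplicity of the part `i` in the partition `λ` of `n`. -/
noncomputable def hPoly (n : ℕ) (μ : Nat.Partition n) : Polynomial ℤ :=
  ∏ i ∈ Finset.Icc 1 n, (1 + X ^ i) ^ (n / i - μ.parts.count i)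

/-- `G(n,x)`: the (normalized) gcd of the `h_λ(x)` over all partitions `λ` of `n`. -/
noncomputable def GPoly (n : ℕ) : Polynomial ℤ :=
  Finset.univ.gcd (hPoly n)

theorem GPoly_dvd_sum (n : ℕ) :
    ∃ q : Polynomial ℤ, (∑ μ : Nat.Partition n, hPoly n μ) = GPoly n * q :=
  exists_eq_mul_right_of_dvd
    (Finset.dvd_sum fun μ _ => Finset.gcd_dvd (Finset.mem_univ μ))

/-- `num(n,x) = (∑_{λ ⊢ n} h_λ(x)) / G(n,x)`. -/
noncomputable def numPoly (n : ℕ) : Polynomial ℤ :=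
  (GPoly_dvd_sum n).choose

theorem GPoly_dvd_prod (n : ℕ) :
    ∃ q : Polynomial ℤ,
      (∏ i ∈ Finset.Icc 1 n, ((1 : Polynomial ℤ) + X ^ i) ^ (n / i)) = GPoly n * q :=
  exists_eq_mul_right_of_dvd <|
    dvd_trans (Finset.gcd_dvd (Finset.mem_univ (Nat.Partition.indiscrete n)))
      (Finset.prod_dvd_prod_of_dvd _ _ fun _ _ => pow_dvd_pow _ (Nat.sub_le _ _))

/-- `den(n,x) = (∏_{i=1}^{n} (1+x^i)^⌊n/i⌋) / G(n,x)`. -/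
noncomputable def denPoly (n : ℕ) : Polynomial ℤ :=
  (GPoly_dvd_prod n).choose

-- auxiliary lemmas

lemma aux_count_sum (r : ℕ) (μ : Nat.Partition r) :
    ∑ i ∈ Finset.Icc 1 r, μ.parts.count i * i = r := by
  have h1 : μ.parts.sum = ∑ i ∈ μ.parts.toFinset, μ.parts.count i * i := by
    simpa using Finset.sum_multiset_map_count μ.parts (id : ℕ → ℕ)
  have hsub : μ.parts.toFinset ⊆ Finset.Icc 1 r := by
    intro a ha
    rw [Multiset.mem_toFinset] at ha
    exact Finset.mem_Icc.2 ⟨μ.parts_pos ha, μ.parts_sum ▸ Multiset.le_sum_of_mem ha⟩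
  rw [← Finset.sum_subset hsub (fun x _ hx => by
    simp [Multiset.count_eq_zero_of_notMem (fun h => hx (Multiset.mem_toFinset.2 h))]),
    ← h1, μ.parts_sum]

lemma aux_count_le (r : ℕ) (μ : Nat.Partition r) {i : ℕ} (hi : i ∈ Finset.Icc 1 r) :
    μ.parts.count i ≤ r / i := by
  obtain ⟨h1, _⟩ := Finset.mem_Icc.1 hi
  have := Finset.single_le_sum (f := fun j => μ.parts.count j * j)
    (fun j _ => Nat.zero_le _) hi
  rw [aux_count_sum r μ] at this
  exact (Nat.le_div_iff_mul_le h1).2 this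

lemma aux_exp_sum (r : ℕ) (μ : Nat.Partition r) :
    r + ∑ i ∈ Finset.Icc 1 r, i * (r / i - μ.parts.count i)
      = ∑ i ∈ Finset.Icc 1 r, i * (r / i) := by
  have h1 : ∀ i ∈ Finset.Icc 1 r,
      i * (r / i - μ.parts.count i) = i * (r / i) - i * μ.parts.count i :=
    fun i _ => Nat.mul_sub i _ _
  rw [Finset.sum_congr rfl h1, Finset.sum_tsub_distrib (f := fun i => i * (r / i))
    (g := fun i => i * μ.parts.count i) _
    (fun i hi => Nat.mul_le_mul_left i (aux_count_le r μ hi))]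
  have h2 : ∑ i ∈ Finset.Icc 1 r, i * μ.parts.count i = r := by
    simpa [Nat.mul_comm] using aux_count_sum r μ
  rw [h2]
  refine Nat.add_sub_cancel' ?_
  calc r = ∑ i ∈ Finset.Icc 1 r, i * μ.parts.count i := h2.symm
    _ ≤ _ := Finset.sum_le_sum (fun i hi =>
        Nat.mul_le_mul_left i (aux_count_le r μ hi))

lemma aux_one_add_exp (a : ℝ) :
    1 + Complex.exp ((a : ℂ) * Complex.I) ^ 2
      = Complex.exp ((a : ℂ) * Complex.I) * ((2 * Real.cos a : ℝ) : ℂ) := by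
  have hc : (Complex.cos a) = (Complex.exp ((a:ℂ) * Complex.I)
      + Complex.exp (-(a:ℂ) * Complex.I)) / 2 := rfl
  push_cast [Complex.ofReal_cos]
  rw [hc]
  rw [← Complex.exp_nat_mul]
  field_simp
  rw [mul_add, ← Complex.exp_add, ← Complex.exp_add]
  ring_nf
  rw [Complex.exp_zero]
  ring

/-- For integers `d ≥ 1` and `0 ≤ r < d`, with `ζ_{2d} := e^{πi/d}`,
the evaluation `num(r, ζ_{2d})` is nonzero. -/
theorem numPoly_ne_zero_at_zeta (d r : ℕ) (hd : 1 ≤ d) (hr : r < d) :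
    Polynomial.aeval (Complex.exp (Real.pi * Complex.I / (d : ℂ))) (numPoly r) ≠ 0 := by
  have hd0 : (d : ℝ) ≠ 0 := by positivity
  set θ : ℝ := Real.pi / (2 * d) with hθ
  set u : ℂ := Complex.exp ((θ : ℂ) * Complex.I) with hu
  have hune : u ≠ 0 := Complex.exp_ne_zero _
  set z : ℂ := Complex.exp (Real.pi * Complex.I / (d : ℂ)) with hz
  have hzu : z = u ^ 2 := by
    rw [hu, hz, ← Complex.exp_nat_mul]
    congr 1
    have hth : (θ : ℂ) = (Real.pi : ℂ) / (2 * (d : ℂ)) := by rw [hθ]; push_cast; ring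
    have hd0' : (d : ℂ) ≠ 0 := by exact_mod_cast (Nat.cast_ne_zero (R := ℂ)).2 (by omega)
    rw [hth]
    field_simp
    ring
  -- powers of u
  have hupow : ∀ i : ℕ, u ^ i = Complex.exp (((i * θ : ℝ) : ℂ) * Complex.I) := by
    intro i
    rw [hu, ← Complex.exp_nat_mul]
    congr 1
    push_cast
    ring
  -- key factorization of 1 + z^i
  have hkey : ∀ i : ℕ, 1 + z ^ i = u ^ i * ((2 * Real.cos (i * θ) : ℝ) : ℂ) := by
    intro i
    have : z ^ i = (u ^ i) ^ 2 := by rw [hzu]; ring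
    rw [this, hupow i, aux_one_add_exp (i * θ)]
  -- cosine positivity
  have hcpos : ∀ i ∈ Finset.Icc 1 r, 0 < 2 * Real.cos (i * θ) := by
    intro i hi
    obtain ⟨h1, h2⟩ := Finset.mem_Icc.1 hi
    have hid : (i : ℝ) < d := by exact_mod_cast lt_of_le_of_lt h2 hr
    have hpos : (0:ℝ) < Real.pi := Real.pi_pos
    have hdpos : (0:ℝ) < d := by positivity
    have h3 : i * θ < Real.pi / 2 := by
      rw [hθ, mul_div_assoc', div_lt_div_iff₀ (by positivity) (by norm_num)]
      nlinarith
    have h4 : (0:ℝ) ≤ i * θ := by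
      have : (0:ℝ) ≤ θ := by rw [hθ]; positivity
      positivity
    refine mul_pos (by norm_num) (Real.cos_pos_of_mem_Ioo ⟨?_, h3⟩)
    linarith [Real.pi_pos]
  set S : ℕ := ∑ i ∈ Finset.Icc 1 r, i * (r / i) with hS
  set c : Nat.Partition r → ℝ := fun μ =>
    ∏ i ∈ Finset.Icc 1 r, (2 * Real.cos (i * θ)) ^ (r / i - μ.parts.count i) with hc
  -- evaluation of each h_λ
  have hterm : ∀ μ : Nat.Partition r,
      u ^ r * Polynomial.aeval z (hPoly r μ) = u ^ S * ((c μ : ℝ) : ℂ) := by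
    intro μ
    have h1 : Polynomial.aeval z (hPoly r μ)
        = ∏ i ∈ Finset.Icc 1 r, (1 + z ^ i) ^ (r / i - μ.parts.count i) := by
      simp [hPoly]
    rw [h1]
    have h2 : ∀ i ∈ Finset.Icc 1 r,
        (1 + z ^ i) ^ (r / i - μ.parts.count i)
          = u ^ (i * (r / i - μ.parts.count i))
            * (((2 * Real.cos (i * θ) : ℝ) : ℂ)) ^ (r / i - μ.parts.count i) := by
      intro i _
      rw [hkey i, mul_pow, ← pow_mul]
    rw [Finset.prod_congr rfl h2, Finset.prod_mul_distrib,
      Finset.prod_pow_eq_pow_sum, ← mul_assoc, ← pow_add, aux_exp_sum r μ, hc]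
    push_cast
    ring
  -- sum over partitions
  have hsum : u ^ r * Polynomial.aeval z (∑ μ : Nat.Partition r, hPoly r μ)
      = u ^ S * ((∑ μ : Nat.Partition r, c μ : ℝ) : ℂ) := by
    rw [map_sum, Finset.mul_sum]
    rw [Finset.sum_congr rfl (fun μ _ => hterm μ)]
    rw [← Finset.mul_sum]
    push_cast
    ring
  have hcsum : 0 < ∑ μ : Nat.Partition r, c μ := by
    have : Nonempty (Nat.Partition r) := ⟨Nat.Partition.indiscrete r⟩
    refine Finset.sum_pos (fun μ _ => ?_) Finset.univ_nonempty
    exact Finset.prod_pos (fun i hi => pow_pos (hcpos i hi) _)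
  have hne : Polynomial.aeval z (∑ μ : Nat.Partition r, hPoly r μ) ≠ 0 := by
    intro h
    rw [h, mul_zero] at hsum
    have : u ^ S * ((∑ μ : Nat.Partition r, c μ : ℝ) : ℂ) ≠ 0 := by
      refine mul_ne_zero (pow_ne_zero _ hune) ?_
      exact_mod_cast hcsum.ne'
    exact this hsum.symm
  have hspec : (∑ μ : Nat.Partition r, hPoly r μ) = GPoly r * numPoly r :=
    (GPoly_dvd_sum r).choose_spec
  intro h
  apply hne
  rw [hspec, map_mul, h, mul_zero]
end

section
/- For every integer n ≥ 0, the common divisor of the binary summands is trivial: G_B(n,x) = 1 in ℤ[x]. -/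
open Polynomial Finset
open scoped Classical

/-- The binary partitions of `n`: partitions of `n` all of whose parts are powers of `2`. -/
noncomputable def binParts (n : ℕ) : Finset (Nat.Partition n) :=
  Finset.univ.filter (fun μ => ∀ i ∈ μ.parts, ∃ k : ℕ, i = 2 ^ k)

/-- `h_{B,λ}(x) = ∏_{k ≥ 0, 2^k ≤ n} (1+x^{2^k})^(⌊n/2^k⌋ - m_λ(2^k))` in `ℤ[x]`. -/
noncomputable def hB (n : ℕ) (μ : Nat.Partition n) : Polynomial ℤ :=
  ∏ k ∈ (Finset.range (n + 1)).filter (fun k => 2 ^ k ≤ n),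
    (1 + X ^ (2 ^ k)) ^ (n / 2 ^ k - μ.parts.count (2 ^ k))

/-- `G_B(n,x)`: the (normalized) gcd of the `h_{B,λ}(x)` over binary partitions `λ` of `n`. -/
noncomputable def GB (n : ℕ) : Polynomial ℤ :=
  (binParts n).gcd (hB n)

theorem GB_dvd_sum (n : ℕ) :
    ∃ q : Polynomial ℤ, (∑ μ ∈ binParts n, hB n μ) = GB n * q :=
  exists_eq_mul_right_of_dvd (Finset.dvd_sum fun _ hμ => Finset.gcd_dvd hμ)

/-- `num_B(n,x) = (∑_{λ binary partition of n} h_{B,λ}(x)) / G_B(n,x)`. -/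
noncomputable def numB (n : ℕ) : Polynomial ℤ :=
  (GB_dvd_sum n).choose

/-- The all-ones partition of `n`. -/
def onesPartition (n : ℕ) : Nat.Partition n :=
  Nat.Partition.ofSums n (Multiset.replicate n 1) (by simp)

theorem onesPartition_mem_binParts (n : ℕ) : onesPartition n ∈ binParts n := by
  simp only [binParts, Finset.mem_filter, Finset.mem_univ, true_and]
  intro i hi
  have h1 : i = 1 := by
    rw [onesPartition, Nat.Partition.ofSums_parts] at hi
    exact Multiset.eq_of_mem_replicate (Multiset.mem_filter.mp hi).1
  exact ⟨0, by simp [h1]⟩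

theorem GB_dvd_prod (n : ℕ) :
    ∃ q : Polynomial ℤ,
      (∏ k ∈ (Finset.range (n + 1)).filter (fun k => 2 ^ k ≤ n),
          ((1 : Polynomial ℤ) + X ^ (2 ^ k)) ^ (n / 2 ^ k)) = GB n * q :=
  exists_eq_mul_right_of_dvd <|
    dvd_trans (Finset.gcd_dvd (onesPartition_mem_binParts n))
      (Finset.prod_dvd_prod_of_dvd _ _ fun _ _ => pow_dvd_pow _ (Nat.sub_le _ _))

/-- `den_B(n,x) = (∏_{k ≥ 0, 2^k ≤ n} (1+x^{2^k})^⌊n/2^k⌋) / G_B(n,x)`. -/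
noncomputable def denB (n : ℕ) : Polynomial ℤ :=
  (GB_dvd_prod n).choose

/-!
The factors `1 + X^(2^k) = Φ_{2^(k+1)}` of every `h_{B,λ}` are pairwise non-associated irreducibles,
so a prime dividing `G_B(n)` divides exactly one of them, say the `j`-th. But the binary partition
of `n` with the greatest possible number `⌊n/2^j⌋` of parts `2^j` has an `h_{B,λ}` in which this
factor does not occur at all.
-/

theorem one_add_X_pow_two_pow_eq_cyclotomic (R : Type*) [CommRing R] (k : ℕ) :
    (1 + X ^ 2 ^ k : R[X]) = cyclotomic (2 ^ (k + 1)) R := by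
  rw [cyclotomic_prime_pow_eq_geom_sum Nat.prime_two, Finset.sum_range_succ,
    Finset.sum_range_one, pow_zero, pow_one]

theorem monic_one_add_X_pow_two_pow (R : Type*) [CommRing R] (k : ℕ) :
    (1 + X ^ 2 ^ k : R[X]).Monic := by
  rw [one_add_X_pow_two_pow_eq_cyclotomic]
  exact cyclotomic.monic _ R

theorem Irreducible.eq_of_dvd_one_add_X_pow_two_pow {p : ℤ[X]} (hp : Irreducible p) {j k : ℕ}
    (hj : p ∣ 1 + X ^ 2 ^ j) (hk : p ∣ 1 + X ^ 2 ^ k) : j = k := by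
  simp only [one_add_X_pow_two_pow_eq_cyclotomic] at hj hk
  have hassoc : Associated (cyclotomic (2 ^ (j + 1)) ℤ) (cyclotomic (2 ^ (k + 1)) ℤ) :=
    (hp.associated_of_dvd (cyclotomic.irreducible (by positivity)) hj).symm.trans
      (hp.associated_of_dvd (cyclotomic.irreducible (by positivity)) hk)
  have heq := cyclotomic_injective
    (eq_of_monic_of_associated (cyclotomic.monic _ ℤ) (cyclotomic.monic _ ℤ) hassoc)
  exact Nat.succ_injective (Nat.pow_right_injective le_rfl heq)

theorem hB_monic (n : ℕ) (μ : Nat.Partition n) : (hB n μ).Monic :=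
  monic_prod_of_monic _ _ fun k _ => (monic_one_add_X_pow_two_pow ℤ k).pow _

theorem Prime.exists_dvd_one_add_X_pow_of_dvd_hB {p : ℤ[X]} (hp : Prime p) {n : ℕ}
    {μ : Nat.Partition n} (hdvd : p ∣ hB n μ) :
    ∃ k, μ.parts.count (2 ^ k) < n / 2 ^ k ∧ p ∣ 1 + X ^ 2 ^ k := by
  obtain ⟨k, -, hpk⟩ := hp.exists_mem_finset_dvd hdvd
  refine ⟨k, Nat.lt_of_sub_pos (Nat.pos_of_ne_zero fun h0 => ?_), hp.dvd_of_dvd_pow hpk⟩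
  rw [h0, pow_zero] at hpk
  exact hp.not_isUnit (isUnit_of_dvd_one hpk)

noncomputable def maxPowPartition (n j : ℕ) : Nat.Partition n :=
  Nat.Partition.ofSums n
    (Multiset.replicate (n / 2 ^ j) (2 ^ j) +
      (((n % 2 ^ j).bitIndices.map (2 ^ ·) : List ℕ) : Multiset ℕ))
    (by
      rw [Multiset.sum_add, Multiset.sum_replicate, Multiset.sum_coe,
        Nat.sum_map_two_pow_bitIndices, smul_eq_mul, mul_comm]
      exact Nat.div_add_mod n (2 ^ j))

theorem maxPowPartition_parts (n j : ℕ) : (maxPowPartition n j).parts =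
    Multiset.replicate (n / 2 ^ j) (2 ^ j) +
      (((n % 2 ^ j).bitIndices.map (2 ^ ·) : List ℕ) : Multiset ℕ) := by
  rw [maxPowPartition, Nat.Partition.ofSums_parts, Multiset.filter_eq_self]
  intro i hi
  rcases Multiset.mem_add.mp hi with hi | hi
  · rw [Multiset.eq_of_mem_replicate hi]
    positivity
  · obtain ⟨a, -, rfl⟩ := List.mem_map.mp (Multiset.mem_coe.mp hi)
    positivity

theorem maxPowPartition_mem_binParts (n j : ℕ) : maxPowPartition n j ∈ binParts n := by
  simp only [binParts, Finset.mem_filter, Finset.mem_univ, true_and]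
  intro i hi
  rcases Multiset.mem_add.mp (maxPowPartition_parts n j ▸ hi) with hi | hi
  · exact ⟨j, Multiset.eq_of_mem_replicate hi⟩
  · obtain ⟨a, -, rfl⟩ := List.mem_map.mp (Multiset.mem_coe.mp hi)
    exact ⟨a, rfl⟩

theorem maxPowPartition_count (n j : ℕ) :
    (maxPowPartition n j).parts.count (2 ^ j) = n / 2 ^ j := by
  rw [maxPowPartition_parts, Multiset.count_add, Multiset.count_replicate_self,
    Multiset.count_eq_zero.2, add_zero]
  intro hmem
  obtain ⟨a, ha, heq⟩ := List.mem_map.mp (Multiset.mem_coe.mp hmem)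
  have hle : 2 ^ a ≤ n % 2 ^ j := by
    rw [← Nat.sum_map_two_pow_bitIndices (n % 2 ^ j)]
    exact List.single_le_sum (fun _ _ => Nat.zero_le _) _ (List.mem_map_of_mem ha)
  have := Nat.mod_lt n (show 0 < 2 ^ j by positivity)
  omega

theorem Prime.not_dvd_GB {p : ℤ[X]} (hp : Prime p) (n : ℕ) : ¬ p ∣ GB n := by
  intro hdvd
  have hdvd_hB {μ} (hμ : μ ∈ binParts n) : p ∣ hB n μ := hdvd.trans (Finset.gcd_dvd hμ)
  obtain ⟨j, -, hpj⟩ :=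
    hp.exists_dvd_one_add_X_pow_of_dvd_hB (hdvd_hB (onesPartition_mem_binParts n))
  obtain ⟨k, hlt, hpk⟩ :=
    hp.exists_dvd_one_add_X_pow_of_dvd_hB (hdvd_hB (maxPowPartition_mem_binParts n j))
  obtain rfl := hp.irreducible.eq_of_dvd_one_add_X_pow_two_pow hpk hpj
  exact hlt.ne (maxPowPartition_count n k)

/-- For every integer `n ≥ 0`, the common divisor of the binary summands is trivial:
`G_B(n,x) = 1` in `ℤ[x]`. -/
theorem GB_eq_one (n : ℕ) : GB n = 1 := by
  have hne : GB n ≠ 0 := fun h0 => (hB_monic n (onesPartition n)).ne_zero <|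
    zero_dvd_iff.mp (h0 ▸ Finset.gcd_dvd (onesPartition_mem_binParts n))
  have hunit : IsUnit (GB n) := by
    by_contra hnu
    obtain ⟨p, hp, hpdvd⟩ := WfDvdMonoid.exists_irreducible_factor hnu hne
    exact hp.prime.not_dvd_GB n hpdvd
  exact Finset.normalize_gcd.symm.trans (normalize_eq_one.mpr hunit)
end

section
/- Let D = 2^s be a power of 2, let r be an integer with 0 ≤ r < D, and let ζ := e^{πi/D}. Then Σ_{ρ binary partition of r} h_{B,ρ}(ζ) ≠ 0; in fact all the nonzero complex numbers h_{B,ρ}(ζ) lie on a single open ray from the origin (they all have argument (π/(2D))·(Σ_{2^k≤r} 2^k·⌊r/2^k⌋ − r)). -/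
open Polynomial Finset
open scoped Classical

/-! With `x = π / (2D)` we have `ζ = e^{2ix}`, so `1 + ζ^{2^k} = 2 cos(2^k x) e^{i 2^k x}`, and
`cos(2^k x) > 0` because `2^k ≤ r < D`. Hence `h_{B,ρ}(ζ)` is a positive real times `e^{ixN}` with
`N = Σ_k 2^k (⌊r/2^k⌋ - m_ρ(2^k)) = Σ_k 2^k ⌊r/2^k⌋ - r`, the parts of `ρ` summing to `r`. The
phase `xN` does not depend on `ρ`, so the sum is a positive multiple of a single unit vector. -/

theorem Complex.one_add_exp_two_mul_mul_I (z : ℂ) :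
    1 + Complex.exp (2 * z * Complex.I) = 2 * Complex.cos z * Complex.exp (z * Complex.I) := by
  rw [Complex.two_cos, add_mul, ← Complex.exp_add, ← Complex.exp_add]
  ring_nf
  rw [Complex.exp_zero, add_comm]

theorem one_add_exp_pi_mul_I_div_pow (D n : ℕ) :
    1 + Complex.exp (Real.pi * Complex.I / D) ^ n =
      ((2 * Real.cos (n * (Real.pi / (2 * D))) : ℝ) : ℂ) *
        Complex.exp ((n * (Real.pi / (2 * D)) : ℝ) * Complex.I) := by
  have hpow : Complex.exp (Real.pi * Complex.I / D) ^ n =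
      Complex.exp (2 * ((n * (Real.pi / (2 * D)) : ℝ) : ℂ) * Complex.I) := by
    rw [← Complex.exp_nat_mul]
    congr 1
    rcases Nat.eq_zero_or_pos D with rfl | hD
    · simp
    · push_cast
      field_simp
  rw [hpow, Complex.one_add_exp_two_mul_mul_I]
  push_cast
  ring

theorem Real.cos_nat_mul_pi_div_two_mul_pos {n D : ℕ} (h : n < D) :
    0 < Real.cos (n * (Real.pi / (2 * D))) := by
  have hD : (0 : ℝ) < D := by exact_mod_cast (Nat.zero_le n).trans_lt h
  have hnD : (n : ℝ) < D := by exact_mod_cast h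
  apply Real.cos_pos_of_mem_Ioo
  constructor
  · have : 0 ≤ n * (Real.pi / (2 * D)) := by positivity
    linarith [Real.pi_pos]
  · calc (n : ℝ) * (Real.pi / (2 * D)) < D * (Real.pi / (2 * D)) := by gcongr
      _ = Real.pi / 2 := by field_simp

theorem Nat.Partition.count_le_div {n : ℕ} (μ : n.Partition) {i : ℕ} (hi : 0 < i) :
    μ.parts.count i ≤ n / i := by
  have hrep : Multiset.replicate (μ.parts.count i) i ≤ μ.parts :=
    Multiset.le_count_iff_replicate_le.mp le_rfl
  obtain ⟨t, ht⟩ := Multiset.le_iff_exists_add.mp hrep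
  have hle : μ.parts.count i * i ≤ μ.parts.sum := by
    conv_rhs => rw [ht, Multiset.sum_add, Multiset.sum_replicate, smul_eq_mul]
    exact Nat.le_add_right _ _
  exact (Nat.le_div_iff_mul_le hi).mpr (hle.trans_eq μ.parts_sum)

theorem sum_count_two_pow_mul_of_mem_binParts {r : ℕ} {ρ : r.Partition} (hρ : ρ ∈ binParts r) :
    ∑ k ∈ (range (r + 1)).filter (fun k => 2 ^ k ≤ r), ρ.parts.count (2 ^ k) * 2 ^ k = r := by
  set K := (range (r + 1)).filter (fun k => 2 ^ k ≤ r)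
  have hsub : ρ.parts.toFinset ⊆ K.image (2 ^ ·) := by
    intro i hi
    rw [Multiset.mem_toFinset] at hi
    obtain ⟨k, rfl⟩ := (mem_filter.mp hρ).2 i hi
    have hk : 2 ^ k ≤ r := ρ.parts_sum ▸ Multiset.le_sum_of_mem hi
    have hkr : k < r + 1 := by have := k.lt_two_pow_self; omega
    exact mem_image.mpr ⟨k, mem_filter.mpr ⟨mem_range.mpr hkr, hk⟩, rfl⟩
  calc ∑ k ∈ K, ρ.parts.count (2 ^ k) * 2 ^ k
      = ∑ i ∈ K.image (2 ^ ·), ρ.parts.count i * i :=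
        (sum_image (f := fun i => ρ.parts.count i * i)
          fun _ _ _ _ h => Nat.pow_right_injective le_rfl h).symm
    _ = ρ.parts.sum := by simp only [sum_multiset_count_of_subset _ _ hsub, smul_eq_mul]
    _ = r := ρ.parts_sum

theorem cast_sum_two_pow_mul_sub_count_of_mem_binParts {r : ℕ} {ρ : r.Partition}
    (hρ : ρ ∈ binParts r) :
    ((∑ k ∈ (range (r + 1)).filter (fun k => 2 ^ k ≤ r),
        2 ^ k * (r / 2 ^ k - ρ.parts.count (2 ^ k)) : ℕ) : ℝ) =
      ((∑ k ∈ (range (r + 1)).filter (fun k => 2 ^ k ≤ r), 2 ^ k * (r / 2 ^ k) : ℕ) : ℝ) -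
        r := by
  have hcount (k : ℕ) : ρ.parts.count (2 ^ k) ≤ r / 2 ^ k := ρ.count_le_div (by positivity)
  have hr : (r : ℝ) = ∑ k ∈ (range (r + 1)).filter (fun k => 2 ^ k ≤ r),
      (ρ.parts.count (2 ^ k) : ℝ) * 2 ^ k := by
    exact_mod_cast (sum_count_two_pow_mul_of_mem_binParts hρ).symm
  rw [hr]
  push_cast [Nat.cast_sub (hcount _)]
  rw [← sum_sub_distrib]
  exact sum_congr rfl fun k _ => by ring

noncomputable def hBModulus (D r : ℕ) (ρ : r.Partition) : ℝ :=
  ∏ k ∈ (range (r + 1)).filter (fun k => 2 ^ k ≤ r),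
    (2 * Real.cos (2 ^ k * (Real.pi / (2 * D)))) ^ (r / 2 ^ k - ρ.parts.count (2 ^ k))

theorem hBModulus_pos {D r : ℕ} (hr : r < D) (ρ : r.Partition) : 0 < hBModulus D r ρ :=
  prod_pos fun k hk => pow_pos (mul_pos two_pos <| by
    exact_mod_cast Real.cos_nat_mul_pi_div_two_mul_pos ((mem_filter.mp hk).2.trans_lt hr)) _

theorem aeval_hB_eq_hBModulus_mul_exp (D : ℕ) {r : ℕ} {ρ : r.Partition} (hρ : ρ ∈ binParts r) :
    Polynomial.aeval (Complex.exp (Real.pi * Complex.I / D)) (hB r ρ) =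
      (hBModulus D r ρ : ℂ) * Complex.exp
        ((((Real.pi / (2 * D)) *
            (((∑ k ∈ (range (r + 1)).filter (fun k => 2 ^ k ≤ r),
                2 ^ k * (r / 2 ^ k) : ℕ) : ℝ) - r)) : ℝ) * Complex.I) := by
  set K := (range (r + 1)).filter (fun k => 2 ^ k ≤ r)
  set ζ := Complex.exp (Real.pi * Complex.I / D)
  set x := Real.pi / (2 * D)
  set e : ℕ → ℕ := fun k => r / 2 ^ k - ρ.parts.count (2 ^ k)
  have hfactor (k : ℕ) (n : ℕ) : (1 + ζ ^ 2 ^ k) ^ n =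
      ((2 * Real.cos (2 ^ k * x)) ^ n : ℝ) * Complex.exp ((n * (2 ^ k * x) : ℝ) * Complex.I) := by
    rw [one_add_exp_pi_mul_I_div_pow, mul_pow, ← Complex.exp_nat_mul]
    push_cast [x]
    ring_nf
  calc Polynomial.aeval ζ (hB r ρ) = ∏ k ∈ K, (1 + ζ ^ 2 ^ k) ^ e k := by simp [hB, K, e]
    _ = (hBModulus D r ρ : ℂ) * Complex.exp ((x * (∑ k ∈ K, 2 ^ k * e k : ℕ) : ℝ) * Complex.I) := by
      simp only [hfactor, prod_mul_distrib, ← Complex.exp_sum, ← Complex.ofReal_prod, ← sum_mul]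
      congr 3
      push_cast
      rw [mul_sum]
      exact sum_congr rfl fun k _ => by ring
    _ = _ := by rw [cast_sum_two_pow_mul_sub_count_of_mem_binParts hρ]

/-- Let `D = 2^s` be a power of `2`, let `0 ≤ r < D`, and let `ζ := e^{πi/D}`.
Then `Σ_{ρ binary partition of r} h_{B,ρ}(ζ) ≠ 0`; in fact all the nonzero complex numbers
`h_{B,ρ}(ζ)` lie on a single open ray from the origin: each of them equals a positive real
multiple of `exp(iθ)`, where `θ = (π/(2D)) · (Σ_{2^k ≤ r} 2^k·⌊r/2^k⌋ − r)`. -/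
theorem binary_same_ray (s r : ℕ) (hr : r < 2 ^ s) :
    (∑ ρ ∈ binParts r,
        Polynomial.aeval (Complex.exp (Real.pi * Complex.I / ((2 ^ s : ℕ) : ℂ))) (hB r ρ)) ≠ 0 ∧
      ∀ ρ ∈ binParts r,
        Polynomial.aeval (Complex.exp (Real.pi * Complex.I / ((2 ^ s : ℕ) : ℂ))) (hB r ρ) ≠ 0 →
        ∃ c : ℝ, 0 < c ∧
          Polynomial.aeval (Complex.exp (Real.pi * Complex.I / ((2 ^ s : ℕ) : ℂ))) (hB r ρ) =
            (c : ℂ) * Complex.exp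
              ((((Real.pi / (2 * (2 ^ s : ℕ))) *
                  (((∑ k ∈ (Finset.range (r + 1)).filter (fun k => 2 ^ k ≤ r),
                      2 ^ k * (r / 2 ^ k) : ℕ) : ℝ) - (r : ℝ))) : ℝ) * Complex.I) := by
  have hval := fun ρ (hρ : ρ ∈ binParts r) => aeval_hB_eq_hBModulus_mul_exp (2 ^ s) hρ
  refine ⟨?_, fun ρ hρ _ => ⟨_, hBModulus_pos hr ρ, hval ρ hρ⟩⟩
  have hsum_pos : 0 < ∑ ρ ∈ binParts r, hBModulus (2 ^ s) r ρ :=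
    sum_pos (fun ρ _ => hBModulus_pos hr ρ) ⟨_, onesPartition_mem_binParts r⟩
  rw [sum_congr rfl hval, ← sum_mul, ← Complex.ofReal_sum]
  exact mul_ne_zero (Complex.ofReal_ne_zero.mpr hsum_pos.ne') (Complex.exp_ne_zero _)
end

section
/- Let n ≥ 1 and a ≥ 0 be integers. The exponent of Φ_{2·3^a}(x) in G_T(n,x) (the largest k such that Φ_{2·3^a}(x)^k divides G_T(n,x) in ℤ[x]) equals Σ_{k>a} ⌊n/3^k⌋; consequently, for every ternary partition λ of n, the exponent of Φ_{2·3^a}(x) in h_{T,λ}(x)/G_T(n,x) equals ⌊n/3^a⌋ − Σ_{k≥a} m_λ(3^k). -/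
open Polynomial Finset
open scoped Classical

/-- The ternary partitions of `n`: partitions of `n` all of whose parts are powers of `3`. -/
noncomputable def terParts (n : ℕ) : Finset (Nat.Partition n) :=
  Finset.univ.filter (fun μ => ∀ i ∈ μ.parts, ∃ k : ℕ, i = 3 ^ k)

/-- `h_{T,λ}(x) = ∏_{k ≥ 0, 3^k ≤ n} (1+x^{3^k})^(⌊n/3^k⌋ - m_λ(3^k))` in `ℤ[x]`. -/
noncomputable def hT (n : ℕ) (μ : Nat.Partition n) : Polynomial ℤ :=
  ∏ k ∈ (Finset.range (n + 1)).filter (fun k => 3 ^ k ≤ n),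
    (1 + X ^ (3 ^ k)) ^ (n / 3 ^ k - μ.parts.count (3 ^ k))

/-- `G_T(n,x)`: the (normalized) gcd of the `h_{T,λ}(x)` over ternary partitions `λ` of `n`. -/
noncomputable def GT (n : ℕ) : Polynomial ℤ :=
  (terParts n).gcd (hT n)

theorem GT_dvd_sum (n : ℕ) :
    ∃ q : Polynomial ℤ, (∑ μ ∈ terParts n, hT n μ) = GT n * q :=
  exists_eq_mul_right_of_dvd (Finset.dvd_sum fun _ hμ => Finset.gcd_dvd hμ)

/-- `num_T(n,x) = (∑_{λ ternary partition of n} h_{T,λ}(x)) / G_T(n,x)`. -/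
noncomputable def numT (n : ℕ) : Polynomial ℤ :=
  (GT_dvd_sum n).choose

/-!
Over any commutative ring, `1 + X^(p^k) = Φ₂ Φ_{2p} ⋯ Φ_{2p^k}` for an odd prime `p`, since
expanding by `X ↦ X^p` sends `Φ₂` to `Φ₂ Φ_{2p}` and `Φ_{2p^j}` to `Φ_{2p^(j+1)}` for `j ≥ 1`.
So the prime `Φ_{2·3^a}` of `ℤ[X]` divides `1 + X^(3^k)` exactly once if `a ≤ k` and not at all
otherwise, and its exponent in `h_{T,λ}` is `Σ_{k>a} ⌊n/3^k⌋ + (⌊n/3^a⌋ - Σ_{k≥a} m_λ(3^k))`.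
The bracket is nonnegative because the parts `3^k`, `k ≥ a`, of `λ` sum to at most `n`, and it
vanishes for `λ = (3^a)^⌊n/3^a⌋ 1^(n mod 3^a)`. The exponent in the gcd is therefore
`Σ_{k>a} ⌊n/3^k⌋`, and the exponent in `h_{T,λ} / G_T` is the bracket.
-/

namespace Polynomial

theorem prod_cyclotomic_two_mul_pow_eq_one_add_X_pow {p : ℕ} (hp : p.Prime) (hp2 : p ≠ 2)
    (R : Type*) [CommRing R] (k : ℕ) :
    ∏ j ∈ range (k + 1), cyclotomic (2 * p ^ j) R = 1 + X ^ p ^ k := by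
  induction k with
  | zero => simp [add_comm]
  | succ k ih =>
    have hbase : expand R p (cyclotomic 2 R) = cyclotomic (2 * p) R * cyclotomic 2 R :=
      cyclotomic_expand_eq_cyclotomic_mul hp
        ((Nat.prime_dvd_prime_iff_eq hp Nat.prime_two).not.mpr hp2) R
    have hstep (j : ℕ) :
        expand R p (cyclotomic (2 * p ^ (j + 1)) R) = cyclotomic (2 * p ^ (j + 2)) R := by
      rw [cyclotomic_expand_eq_cyclotomic hp
          (dvd_mul_of_dvd_right (dvd_pow_self p j.succ_ne_zero) 2), mul_assoc, ← pow_succ]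
    calc ∏ j ∈ range (k + 2), cyclotomic (2 * p ^ j) R
        = expand R p (∏ j ∈ range (k + 1), cyclotomic (2 * p ^ j) R) := by
          rw [prod_range_succ', prod_range_succ', map_prod, prod_range_succ', pow_zero, mul_one,
            hbase]
          simp only [hstep, zero_add, pow_one, mul_assoc]
      _ = 1 + X ^ p ^ (k + 1) := by
          rw [ih, map_add, map_one, map_pow, expand_X, ← pow_mul, pow_succ']

theorem emultiplicity_cyclotomic_cyclotomic {m m' : ℕ} (hm : 0 < m) (hm' : 0 < m') :
    emultiplicity (cyclotomic m ℤ) (cyclotomic m' ℤ) = if m = m' then 1 else 0 := by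
  split_ifs with h
  · subst h
    simpa using emultiplicity_pow_self_of_prime (cyclotomic.irreducible hm).prime 1
  · refine emultiplicity_eq_zero.mpr fun hdvd => h (cyclotomic_injective (R := ℤ) ?_)
    exact eq_of_monic_of_associated (cyclotomic.monic m ℤ) (cyclotomic.monic m' ℤ)
      ((cyclotomic.irreducible hm).associated_of_dvd (cyclotomic.irreducible hm') hdvd)

theorem emultiplicity_cyclotomic_one_add_X_pow {p : ℕ} (hp : p.Prime) (hp2 : p ≠ 2) (a k : ℕ) :
    emultiplicity (cyclotomic (2 * p ^ a) ℤ) (1 + X ^ p ^ k) = if a ≤ k then 1 else 0 := by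
  have hpos (j : ℕ) : 0 < 2 * p ^ j := Nat.mul_pos two_pos (pow_pos hp.pos j)
  rw [← prod_cyclotomic_two_mul_pow_eq_one_add_X_pow hp hp2,
    Finset.emultiplicity_prod (cyclotomic.irreducible (hpos a)).prime]
  simp_rw [emultiplicity_cyclotomic_cyclotomic (hpos a) (hpos _), Nat.mul_left_cancel_iff two_pos,
    (Nat.pow_right_injective hp.two_le).eq_iff, sum_ite_eq, mem_range, Nat.lt_succ_iff]

end Polynomial

theorem emultiplicity_finset_gcd_eq {α β : Type*} [CommMonoidWithZero α]
    [NormalizedGCDMonoid α] {p : α} {s : Finset β} {f : β → α} {m : ℕ}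
    (hle : ∀ b ∈ s, (m : ℕ∞) ≤ emultiplicity p (f b)) {b : β} (hb : b ∈ s)
    (heq : emultiplicity p (f b) = m) : emultiplicity p (s.gcd f) = m :=
  le_antisymm (heq ▸ emultiplicity_le_emultiplicity_of_dvd_right (gcd_dvd hb))
    (le_emultiplicity_of_pow_dvd (dvd_gcd fun b hb => pow_dvd_of_le_emultiplicity (hle b hb)))

namespace Nat.Partition

variable {n : ℕ}

theorem sum_count_mul_le (μ : n.Partition) (s : Finset ℕ) :
    ∑ i ∈ s, μ.parts.count i * i ≤ n :=
  calc ∑ i ∈ s, μ.parts.count i * i ≤ ∑ i ∈ s ∪ μ.parts.toFinset, μ.parts.count i * i :=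
        sum_le_sum_of_subset subset_union_left
    _ = μ.parts.sum := by
        rw [sum_multiset_count_of_subset μ.parts (s ∪ _) subset_union_right]
        simp only [smul_eq_mul, mul_comm]
    _ = n := μ.parts_sum

theorem count_le_div_s18 (μ : n.Partition) {i : ℕ} (hi : 0 < i) : μ.parts.count i ≤ n / i :=
  (Nat.le_div_iff_mul_le hi).mpr (by simpa using μ.sum_count_mul_le {i})

theorem sum_count_pow_le_div (μ : n.Partition) {b : ℕ} (hb : 1 < b) (a m : ℕ) :
    ∑ k ∈ Icc a m, μ.parts.count (b ^ k) ≤ n / b ^ a := by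
  refine (Nat.le_div_iff_mul_le (by positivity)).mpr ?_
  calc (∑ k ∈ Icc a m, μ.parts.count (b ^ k)) * b ^ a
      ≤ ∑ k ∈ Icc a m, μ.parts.count (b ^ k) * b ^ k := by
        rw [sum_mul]
        exact sum_le_sum fun k hk =>
          Nat.mul_le_mul_left _ (Nat.pow_le_pow_right hb.le (mem_Icc.mp hk).1)
    _ = ∑ i ∈ (Icc a m).image (b ^ ·), μ.parts.count i * i :=
        (sum_image (f := fun i => μ.parts.count i * i)
          (Nat.pow_right_injective hb).injOn).symm
    _ ≤ n := μ.sum_count_mul_le _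

def ofDivMod (n d : ℕ) : n.Partition where
  parts := Multiset.replicate (n / d) d + Multiset.replicate (n % d) 1
  parts_pos {i} hi := by
    rcases Multiset.mem_add.mp hi with h | h <;> obtain ⟨hne, rfl⟩ := Multiset.mem_replicate.mp h
    · exact Nat.pos_of_ne_zero fun hd => hne (by rw [hd, Nat.div_zero])
    · exact one_pos
  parts_sum := by simp [Nat.div_add_mod']

theorem div_le_count_ofDivMod (n d : ℕ) : n / d ≤ (ofDivMod n d).parts.count d := by
  simp [ofDivMod]

end Nat.Partition

theorem ofDivMod_three_pow_mem_terParts (n a : ℕ) :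
    Nat.Partition.ofDivMod n (3 ^ a) ∈ terParts n := by
  refine mem_filter.mpr ⟨mem_univ _, fun i hi => ?_⟩
  rcases Multiset.mem_add.mp hi with h | h <;> obtain ⟨-, rfl⟩ := Multiset.mem_replicate.mp h
  exacts [⟨a, rfl⟩, ⟨0, rfl⟩]

theorem exists_mem_terParts_sum_count_eq (n a : ℕ) :
    ∃ μ ∈ terParts n, ∑ k ∈ Icc a n, μ.parts.count (3 ^ k) = n / 3 ^ a := by
  set μ := Nat.Partition.ofDivMod n (3 ^ a)
  refine ⟨μ, ofDivMod_three_pow_mem_terParts n a,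
    le_antisymm (μ.sum_count_pow_le_div (by norm_num) a n) ?_⟩
  rcases Nat.eq_zero_or_pos (n / 3 ^ a) with h | h
  · exact h ▸ Nat.zero_le _
  have han : a ≤ n := (Nat.lt_pow_self (by norm_num : 1 < 3)).le.trans (Nat.div_pos_iff.mp h).2
  calc n / 3 ^ a ≤ μ.parts.count (3 ^ a) := Nat.Partition.div_le_count_ofDivMod n _
    _ ≤ ∑ k ∈ Icc a n, μ.parts.count (3 ^ k) :=
        single_le_sum (f := fun k => μ.parts.count (3 ^ k)) (fun _ _ => Nat.zero_le _)
          (mem_Icc.mpr ⟨le_rfl, han⟩)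

theorem sum_div_sub_count_eq (n a : ℕ) (μ : n.Partition) :
    ∑ k ∈ Icc a n, (n / 3 ^ k - μ.parts.count (3 ^ k)) =
      ∑ k ∈ Icc (a + 1) n, n / 3 ^ k + (n / 3 ^ a - ∑ k ∈ Icc a n, μ.parts.count (3 ^ k)) := by
  have hsplit : ∑ k ∈ Icc a n, n / 3 ^ k = n / 3 ^ a + ∑ k ∈ Icc (a + 1) n, n / 3 ^ k := by
    rcases le_or_gt a n with h | h
    · rw [← Ioc_insert_left h, sum_insert left_notMem_Ioc, Icc_add_one_left_eq_Ioc]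
    · rw [Icc_eq_empty (by omega), Icc_eq_empty (by omega),
        Nat.div_eq_of_lt (h.trans (Nat.lt_pow_self (by norm_num))), zero_add]
  rw [sum_tsub_distrib _ fun k _ => μ.count_le_div_s18 (by positivity), hsplit]
  have := μ.sum_count_pow_le_div (by norm_num : 1 < 3) a n
  omega

theorem emultiplicity_cyclotomic_hT (n a : ℕ) (μ : n.Partition) :
    emultiplicity (cyclotomic (2 * 3 ^ a) ℤ) (hT n μ) =
      ↑(∑ k ∈ Icc (a + 1) n, n / 3 ^ k + (n / 3 ^ a - ∑ k ∈ Icc a n, μ.parts.count (3 ^ k))) := by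
  have hΦ : Prime (cyclotomic (2 * 3 ^ a) ℤ) := (cyclotomic.irreducible (by positivity)).prime
  rw [hT, Finset.emultiplicity_prod hΦ, ← sum_div_sub_count_eq]
  simp_rw [emultiplicity_pow hΦ,
    emultiplicity_cyclotomic_one_add_X_pow Nat.prime_three (by norm_num), mul_ite, mul_one, mul_zero]
  rw [← sum_filter]
  push_cast
  refine sum_subset (fun k hk => ?_) (fun k hk hk' => ?_)
  · simp only [mem_filter, mem_range] at hk
    exact mem_Icc.mpr ⟨hk.2, by omega⟩
  · have hlt : n < 3 ^ k := by
      simp only [mem_filter, mem_range, mem_Icc] at hk hk'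
      omega
    simp [Nat.div_eq_of_lt hlt]

theorem exponent_of_cyclotomic_in_GT_general (n a : ℕ) :
    (Polynomial.cyclotomic (2 * 3 ^ a) ℤ ^ (∑ k ∈ Finset.Icc (a + 1) n, n / 3 ^ k) ∣ GT n ∧
      ¬ Polynomial.cyclotomic (2 * 3 ^ a) ℤ ^
          ((∑ k ∈ Finset.Icc (a + 1) n, n / 3 ^ k) + 1) ∣ GT n) ∧
    ∀ μ ∈ terParts n, ∀ q : Polynomial ℤ, hT n μ = GT n * q →
      ∃ m : ℕ,
        (m : ℤ) = (n / 3 ^ a : ℕ) -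
            ∑ k ∈ Finset.Icc a n, (μ.parts.count (3 ^ k) : ℤ) ∧
        Polynomial.cyclotomic (2 * 3 ^ a) ℤ ^ m ∣ q ∧
        ¬ Polynomial.cyclotomic (2 * 3 ^ a) ℤ ^ (m + 1) ∣ q := by
  have hΦ : Prime (cyclotomic (2 * 3 ^ a) ℤ) := (cyclotomic.irreducible (by positivity)).prime
  have hGT : emultiplicity (cyclotomic (2 * 3 ^ a) ℤ) (GT n) =
      ↑(∑ k ∈ Icc (a + 1) n, n / 3 ^ k) := by
    obtain ⟨μ₀, hμ₀, hcount⟩ := exists_mem_terParts_sum_count_eq n a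
    refine emultiplicity_finset_gcd_eq (fun μ _ => ?_) hμ₀
      (by rw [emultiplicity_cyclotomic_hT, hcount, Nat.sub_self, add_zero])
    rw [emultiplicity_cyclotomic_hT]
    exact_mod_cast Nat.le_add_right _ _
  refine ⟨emultiplicity_eq_coe.mp hGT, fun μ _ q hq =>
    ⟨n / 3 ^ a - ∑ k ∈ Icc a n, μ.parts.count (3 ^ k), ?_, emultiplicity_eq_coe.mp ?_⟩⟩
  · push_cast [μ.sum_count_pow_le_div (by norm_num : 1 < 3) a n]
    rfl
  · have h := emultiplicity_mul hΦ (a := GT n) (b := q)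
    rw [← hq, emultiplicity_cyclotomic_hT, hGT, Nat.cast_add] at h
    exact (WithTop.add_left_cancel (ENat.natCast_ne_top _) h).symm

/-- Let `n ≥ 1` and `a ≥ 0`.  The exponent of `Φ_{2·3^a}(x)` in `G_T(n,x)` (the largest `k`
such that `Φ_{2·3^a}(x)^k` divides `G_T(n,x)` in `ℤ[x]`) equals `Σ_{k>a} ⌊n/3^k⌋`;
consequently, for every ternary partition `λ` of `n`, the exponent of `Φ_{2·3^a}(x)` in
`h_{T,λ}(x)/G_T(n,x)` equals `⌊n/3^a⌋ − Σ_{k≥a} m_λ(3^k)`.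
(The sums over `k` are truncated at `k = n`, since the omitted terms vanish; the quotient
`q` is characterized by `h_{T,λ} = G_T(n,x)·q`.) -/
theorem exponent_of_cyclotomic_in_GT (n a : ℕ) (hn : 1 ≤ n) :
    (Polynomial.cyclotomic (2 * 3 ^ a) ℤ ^ (∑ k ∈ Finset.Icc (a + 1) n, n / 3 ^ k) ∣ GT n ∧
      ¬ Polynomial.cyclotomic (2 * 3 ^ a) ℤ ^
          ((∑ k ∈ Finset.Icc (a + 1) n, n / 3 ^ k) + 1) ∣ GT n) ∧
    ∀ μ ∈ terParts n, ∀ q : Polynomial ℤ, hT n μ = GT n * q →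
      ∃ m : ℕ,
        (m : ℤ) = (n / 3 ^ a : ℕ) -
            ∑ k ∈ Finset.Icc a n, (μ.parts.count (3 ^ k) : ℤ) ∧
        Polynomial.cyclotomic (2 * 3 ^ a) ℤ ^ m ∣ q ∧
        ¬ Polynomial.cyclotomic (2 * 3 ^ a) ℤ ^ (m + 1) ∣ q :=
  exponent_of_cyclotomic_in_GT_general n a
end

section
/- For every integer n ≥ 0, the evaluation of the ternary numerator at x = 1 satisfies num_T(n,1) = Σ_{λ ternary partition of n} 2^{n − ℓ(λ)}, where ℓ(λ) denotes the number of parts of λ (with the empty partition giving the value 1 for n = 0). -/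
open Polynomial Finset
open scoped Classical

/-!
At `x = 1` every factor `1 + x^{3^k}` of `h_{T,λ}` equals `2`, so `h_{T,λ}(1) = 2^{S - ℓ(λ)}` with
`S = ∑_{3^k ≤ n} ⌊n/3^k⌋`. Since `1 + x` divides every factor and `ℓ(λ) ≤ n`, `(1 + x)^{S-n}`
divides `G_T`; conversely `G_T` divides `h_{T,1^n}`, whose value at `1` is `2^{S-n}`. Hence
`G_T(1) = ±2^{S-n}`, and the sign is `+`: `G_T` is normalized, so its leading coefficient is
positive, and it has no real root in `[1, ∞)` because `h_{T,1^n}` has none. Dividing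
`∑_λ h_{T,λ}(1) = ∑_λ 2^{S-ℓ(λ)}` by `G_T(1) = 2^{S-n}` gives the claim.
-/

namespace Nat.Partition

theorem count_parts_le_div {n a : ℕ} (μ : n.Partition) (ha : 0 < a) :
    μ.parts.count a ≤ n / a := by
  obtain ⟨rest, hrest⟩ := Multiset.le_iff_exists_add.mp
    (Multiset.le_count_iff_replicate_le.mp (le_refl (μ.parts.count a)))
  have hsum := μ.parts_sum
  rw [hrest, Multiset.sum_add, Multiset.sum_replicate, smul_eq_mul] at hsum
  exact (Nat.le_div_iff_mul_le ha).mpr (by omega)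

theorem card_parts_le {n : ℕ} (μ : n.Partition) : Multiset.card μ.parts ≤ n := by
  simpa [μ.parts_sum] using Multiset.card_nsmul_le_sum (fun _ hx => μ.parts_pos hx)

def ones (n : ℕ) : n.Partition :=
  ofSums n (Multiset.replicate n 1) (by simp)

@[simp]
theorem ones_parts (n : ℕ) : (ones n).parts = Multiset.replicate n 1 := by
  rw [ones, ofSums_parts, Multiset.filter_eq_self]
  exact fun _ hx => by simp [Multiset.eq_of_mem_replicate hx]

end Nat.Partition

theorem Polynomial.eval_pos_of_leadingCoeff_pos {P : ℝ[X]} (hlc : 0 < P.leadingCoeff) {a : ℝ}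
    (hroots : ∀ x, a ≤ x → P.eval x ≠ 0) : 0 < P.eval a := by
  have hlead : ∀ᶠ x in Filter.atTop, 0 < P.leadingCoeff * x ^ P.natDegree := by
    filter_upwards [Filter.eventually_gt_atTop 0] with x hx using mul_pos hlc (pow_pos hx _)
  obtain ⟨b, hb, hab⟩ := ((P.isEquivalent_atTop_lead.eventually_pos hlead).and
    (Filter.eventually_ge_atTop a)).exists
  by_contra! ha
  obtain ⟨c, hc, hPc⟩ := intermediate_value_Icc hab P.continuous.continuousOn ⟨ha, hb.le⟩
  exact hroots c hc.1 hPc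

namespace Ternary

def exps (n : ℕ) : Finset ℕ := {k ∈ range (n + 1) | 3 ^ k ≤ n}

theorem mem_exps_of_pow_le {n k : ℕ} (hk : 3 ^ k ≤ n) : k ∈ exps n := by
  have := Nat.lt_pow_self (n := k) (by norm_num : 1 < 3)
  exact mem_filter.mpr ⟨mem_range.mpr (by omega), hk⟩

def floorSum (n : ℕ) : ℕ := ∑ k ∈ exps n, n / 3 ^ k

theorem le_floorSum (n : ℕ) : n ≤ floorSum n := by
  rcases Nat.eq_zero_or_pos n with rfl | hn
  · exact le_rfl
  · calc n = n / 3 ^ 0 := by simp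
      _ ≤ floorSum n := single_le_sum (f := fun k => n / 3 ^ k) (fun _ _ => Nat.zero_le _)
          (mem_exps_of_pow_le (by rw [pow_zero]; exact hn))

theorem ones_mem_terParts (n : ℕ) : Nat.Partition.ones n ∈ terParts n := by
  simp only [terParts, mem_filter, mem_univ, true_and, Nat.Partition.ones_parts]
  exact fun i hi => ⟨0, by simpa using Multiset.eq_of_mem_replicate hi⟩

theorem sum_count_pow_three_eq_card {n : ℕ} {μ : n.Partition} (hμ : μ ∈ terParts n) :
    ∑ k ∈ exps n, μ.parts.count (3 ^ k) = Multiset.card μ.parts := by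
  have hpow : ∀ i ∈ μ.parts, ∃ k, i = 3 ^ k := (mem_filter.mp hμ).2
  have hsupp : μ.parts.toFinset ⊆ (exps n).image (3 ^ ·) := fun i hi => by
    obtain ⟨k, rfl⟩ := hpow i (Multiset.mem_toFinset.mp hi)
    exact mem_image_of_mem _ (mem_exps_of_pow_le (μ.le_of_mem_parts (Multiset.mem_toFinset.mp hi)))
  calc ∑ k ∈ exps n, μ.parts.count (3 ^ k)
      = ∑ i ∈ (exps n).image (3 ^ ·), μ.parts.count i :=
        (sum_image (f := μ.parts.count) fun _ _ _ _ h =>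
          Nat.pow_right_injective (by norm_num : 2 ≤ 3) h).symm
    _ = ∑ i ∈ μ.parts.toFinset, μ.parts.count i :=
        (sum_subset hsupp fun _ _ hi => Multiset.count_eq_zero.mpr
          (mt Multiset.mem_toFinset.mpr hi)).symm
    _ = Multiset.card μ.parts := Multiset.toFinset_sum_count_eq _

theorem sum_exponents_hT_eq {n : ℕ} {μ : n.Partition} (hμ : μ ∈ terParts n) :
    ∑ k ∈ exps n, (n / 3 ^ k - μ.parts.count (3 ^ k)) = floorSum n - Multiset.card μ.parts := by
  rw [sum_tsub_distrib _ fun k _ => μ.count_parts_le_div (Nat.pow_pos (by norm_num)),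
    sum_count_pow_three_eq_card hμ, floorSum]

theorem eval_one_hT {n : ℕ} {μ : n.Partition} (hμ : μ ∈ terParts n) :
    (hT n μ).eval 1 = 2 ^ (floorSum n - Multiset.card μ.parts) := by
  rw [← sum_exponents_hT_eq hμ, ← prod_pow_eq_pow_sum, hT, eval_prod]
  exact prod_congr rfl fun k _ => by norm_num

theorem one_add_X_pow_dvd_hT {n : ℕ} {μ : n.Partition} (hμ : μ ∈ terParts n) :
    (1 + X : ℤ[X]) ^ (floorSum n - Multiset.card μ.parts) ∣ hT n μ := by
  rw [← sum_exponents_hT_eq hμ, ← prod_pow_eq_pow_sum, hT]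
  refine prod_dvd_prod_of_dvd _ _ fun k _ => pow_dvd_pow_of_dvd ?_ _
  simpa using Odd.add_dvd_pow_add_pow (1 : ℤ[X]) X (Odd.pow (by decide : Odd 3) (n := k))

theorem aeval_hT_pos {n : ℕ} (μ : n.Partition) {x : ℝ} (hx : 0 ≤ x) : 0 < aeval x (hT n μ) := by
  simp only [hT, map_prod, map_pow, map_add, map_one, aeval_X]
  exact prod_pos fun k _ => by positivity

theorem one_add_X_pow_dvd_GT (n : ℕ) : (1 + X : ℤ[X]) ^ (floorSum n - n) ∣ GT n :=
  Finset.dvd_gcd fun μ hμ =>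
    (pow_dvd_pow _ (by have := μ.card_parts_le; omega)).trans (one_add_X_pow_dvd_hT hμ)

theorem two_pow_dvd_eval_one_GT (n : ℕ) : 2 ^ (floorSum n - n) ∣ (GT n).eval 1 := by
  simpa [one_add_one_eq_two] using eval_dvd (x := 1) (one_add_X_pow_dvd_GT n)

theorem eval_one_GT_dvd (n : ℕ) : (GT n).eval 1 ∣ 2 ^ (floorSum n - n) := by
  simpa [GT, eval_one_hT (ones_mem_terParts n)] using
    eval_dvd (x := 1) (gcd_dvd (f := hT n) (ones_mem_terParts n))

theorem GT_ne_zero (n : ℕ) : GT n ≠ 0 := fun h => by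
  simpa [h] using eval_one_GT_dvd n

theorem leadingCoeff_GT_pos (n : ℕ) : 0 < (GT n).leadingCoeff := by
  have hnorm : normalize (GT n) = GT n := normalize_gcd
  rw [← hnorm, leadingCoeff_normalize, ← Int.abs_eq_normalize]
  exact abs_pos.mpr (leadingCoeff_ne_zero.mpr (GT_ne_zero n))

theorem eval_one_GT_pos (n : ℕ) : 0 < (GT n).eval 1 := by
  set P := (GT n).map (algebraMap ℤ ℝ)
  have hlc : 0 < P.leadingCoeff := by
    rw [leadingCoeff_map_of_injective (RingHom.injective_int _)]
    simpa using leadingCoeff_GT_pos n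
  have hroots : ∀ x : ℝ, 1 ≤ x → P.eval x ≠ 0 := fun x hx hx0 => by
    have hdvd := map_dvd (aeval x) (gcd_dvd (f := hT n) (ones_mem_terParts n))
    rw [← GT, ← eval_map_algebraMap, hx0, zero_dvd_iff] at hdvd
    exact (aeval_hT_pos _ (zero_le_one.trans hx)).ne' hdvd
  have hP1 := P.eval_pos_of_leadingCoeff_pos hlc hroots
  simpa [P, eval_one_map] using hP1

theorem eval_one_GT (n : ℕ) : (GT n).eval 1 = 2 ^ (floorSum n - n) :=
  Int.dvd_antisymm (eval_one_GT_pos n).le (by positivity) (eval_one_GT_dvd n)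
    (two_pow_dvd_eval_one_GT n)

end Ternary

/-- For every integer `n ≥ 0`, the evaluation of the ternary numerator at `x = 1` satisfies
`num_T(n,1) = Σ_{λ ternary partition of n} 2^{n − ℓ(λ)}`, where `ℓ(λ)` is the number of
parts of `λ` (with the empty partition giving the value `1` for `n = 0`). -/
theorem numT_eval_one (n : ℕ) :
    Polynomial.eval (1 : ℤ) (numT n) =
      ∑ μ ∈ terParts n, (2 : ℤ) ^ (n - Multiset.card μ.parts) := by
  have hspec : ∑ μ ∈ terParts n, hT n μ = GT n * numT n := (GT_dvd_sum n).choose_spec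
  have h := congrArg (eval 1) hspec
  rw [eval_finsetSum, eval_mul, Ternary.eval_one_GT] at h
  refine mul_left_cancel₀ (pow_ne_zero _ two_ne_zero) (h.symm.trans ?_)
  rw [mul_sum]
  refine sum_congr rfl fun μ hμ => ?_
  rw [Ternary.eval_one_hT hμ, ← pow_add]
  have := μ.card_parts_le
  have := Ternary.le_floorSum n
  congr 1
  omega
end
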